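/- arXiv:1406.0707 — 6 statements merged into one kernel-verified Lean document; each statement's English description precedes it below -/
import Mathlib

section
/- Discrete fundamental lemma of the calculus of variations (first order, h = 1): Let a < b be integers with b − a ≥ 2, and let f₀, f₁ : ℤ → ℝ. Suppose that for every η : ℤ → ℝ with η(a) = 0 and η(b) = 0 we have ∑_{t=a}^{b-1} ( f₀(t)·η(t+1) + f₁(t)·Δη(t) ) = 0, where Δη(t) = η(t+1) − η(t). Then f₀(t) − Δf₁(t) = 0 for all integers t with a ≤ t ≤ b − 2. -/
/-!
Testing the vanishing first variation against the unit bump at `t + 1`, which vanishes at `a` and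
`b` because `a < t + 1 < b`, leaves only the terms with `u = t` and `u = t + 1`, namely
`f₀ t + f₁ t - f₁ (t + 1)`.
-/

open Finset

section BumpVariation

variable {R : Type*} [CommRing R] {a b t : ℤ}

noncomputable def firstVariation (a b : ℤ) (f0 f1 η : ℤ → R) : R :=
  ∑ u ∈ Ico a b, (f0 u * η (u + 1) + f1 u * (η (u + 1) - η u))

lemma sum_Ico_mul_single_self (g : ℤ → R) (hat : a ≤ t) (htb : t < b) :
    ∑ u ∈ Ico a b, g u * (Pi.single t 1 : ℤ → R) u = g t := by
  simp [Pi.single_apply, hat, htb]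

lemma sum_Ico_mul_single_add_one (g : ℤ → R) (hat : a ≤ t) (htb : t < b) :
    ∑ u ∈ Ico a b, g u * (Pi.single (t + 1) 1 : ℤ → R) (u + 1) = g t := by
  simpa [Pi.single_apply] using sum_Ico_mul_single_self g hat htb

lemma firstVariation_single_add_one (f0 f1 : ℤ → R) (hat : a ≤ t) (htb : t + 1 < b) :
    firstVariation a b f0 f1 (Pi.single (t + 1) 1) = f0 t - (f1 (t + 1) - f1 t) := by
  simp only [firstVariation, mul_sub, sum_add_distrib, sum_sub_distrib,
    sum_Ico_mul_single_add_one _ hat (by omega : t < b),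
    sum_Ico_mul_single_self _ (by omega : a ≤ t + 1) htb]
  abel

end BumpVariation

theorem discrete_fundamental_lemma_general (a b : ℤ) (f0 f1 : ℤ → ℝ)
    (hyp : ∀ η : ℤ → ℝ, η a = 0 → η b = 0 →
      ∑ t ∈ Finset.Ico a b, (f0 t * η (t + 1) + f1 t * (η (t + 1) - η t)) = 0) :
    ∀ t : ℤ, a ≤ t → t ≤ b - 2 → f0 t - (f1 (t + 1) - f1 t) = 0 := by
  intro t hat htb
  have hbump : firstVariation a b f0 f1 (Pi.single (t + 1) 1) = 0 :=
    hyp _ (Pi.single_eq_of_ne (by omega) 1) (Pi.single_eq_of_ne (by omega) 1)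
  rwa [firstVariation_single_add_one f0 f1 hat (by omega)] at hbump

theorem discrete_fundamental_lemma (a b : ℤ) (hab : a + 2 ≤ b) (f0 f1 : ℤ → ℝ)
    (hyp : ∀ η : ℤ → ℝ, η a = 0 → η b = 0 →
      ∑ t ∈ Finset.Ico a b, (f0 t * η (t + 1) + f1 t * (η (t + 1) - η t)) = 0) :
    ∀ t : ℤ, a ≤ t → t ≤ b - 2 → f0 t - (f1 (t + 1) - f1 t) = 0 :=
  discrete_fundamental_lemma_general a b f0 f1 hyp
end

section
/- Discrete Euler–Lagrange equation (ℤ, scalar case): Let a < b be integers with b − a ≥ 2, L : ℤ × ℝ × ℝ → ℝ with L(t, ·, ·) continuously differentiable for each t, and α, β ∈ ℝ. If y* : ℤ → ℝ with y*(a) = α, y*(b) = β is a local minimizer of ℒ[y] = ∑_{t=a}^{b-1} L(t, y(t+1), Δy(t)) over all y with y(a) = α, y(b) = β (local with respect to the sup-norm of y and Δy on [a,b]), then Δ[∂L/∂v (t, y*(t+1), Δy*(t))] = ∂L/∂u (t, y*(t+1), Δy*(t)) for all integers t with a ≤ t ≤ b − 2, where ∂L/∂u and ∂L/∂v denote partial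 derivatives in the second and third arguments and Δ is the forward difference in t. -/
/-!
Perturb `ystar` at the single interior node `t + 1` by `ε`. Only the summands at `t` and `t + 1`
see the change, so `ε ↦ ℒ[ystar + ε · 𝟙_{t+1}]` is, up to a constant, a sum of two terms of `L`;
it has a local minimum at `0`, and its derivative there,
`∂ᵤL(t) + ∂ᵥL(t) - ∂ᵥL(t + 1)`, must vanish.
-/

open Finset

noncomputable def discreteAction (L : ℤ → ℝ → ℝ → ℝ) (a b : ℤ) (y : ℤ → ℝ) : ℝ :=
  ∑ t ∈ Ico a b, L t (y (t + 1)) (y (t + 1) - y t)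

section Calculus

variable {f : ℝ → ℝ → ℝ} {u v : ℝ}

theorem HasFDerivAt.hasDerivAt_uncurry_fst {f' : ℝ × ℝ →L[ℝ] ℝ}
    (hf : HasFDerivAt (fun p : ℝ × ℝ => f p.1 p.2) f' (u, v)) :
    HasDerivAt (fun x => f x v) (f' (1, 0)) u :=
  hf.comp_hasDerivAt (f := fun x => (x, v)) u ((hasDerivAt_id u).prodMk (hasDerivAt_const u v))

theorem HasFDerivAt.hasDerivAt_uncurry_snd {f' : ℝ × ℝ →L[ℝ] ℝ}
    (hf : HasFDerivAt (fun p : ℝ × ℝ => f p.1 p.2) f' (u, v)) :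
    HasDerivAt (fun x => f u x) (f' (0, 1)) v :=
  hf.comp_hasDerivAt (f := fun x => (u, x)) v ((hasDerivAt_const v u).prodMk (hasDerivAt_id v))

theorem hasDerivAt_uncurry_diagonal_shift
    (hf : DifferentiableAt ℝ (fun p : ℝ × ℝ => f p.1 p.2) (u, v)) :
    HasDerivAt (fun ε => f (u + ε) (v + ε))
      (deriv (fun x => f x v) u + deriv (fun x => f u x) v) 0 := by
  have hF := hf.hasFDerivAt
  rw [hF.hasDerivAt_uncurry_fst.deriv, hF.hasDerivAt_uncurry_snd.deriv, ← map_add,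
    Prod.mk_add_mk, add_zero, zero_add]
  have hshift : HasDerivAt (fun ε : ℝ => (u + ε, v + ε)) (1, 1) 0 :=
    ((hasDerivAt_id 0).const_add u).prodMk ((hasDerivAt_id 0).const_add v)
  exact (by simpa using hF : HasFDerivAt _ _ (u + 0, v + 0)).comp_hasDerivAt 0 hshift

theorem hasDerivAt_uncurry_snd_sub
    (hf : DifferentiableAt ℝ (fun p : ℝ × ℝ => f p.1 p.2) (u, v)) :
    HasDerivAt (fun ε => f u (v - ε)) (-deriv (fun x => f u x) v) 0 := by
  have hg := hf.hasFDerivAt.hasDerivAt_uncurry_snd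
  rw [hg.deriv]
  exact HasDerivAt.comp_const_sub v 0 (by simpa using hg)

end Calculus

section Variation

variable {L : ℤ → ℝ → ℝ → ℝ} {a b t : ℤ}

theorem discreteAction_add_single_sub (hat : a ≤ t) (htb : t + 2 ≤ b) (y : ℤ → ℝ) (ε : ℝ) :
    discreteAction L a b (y + Pi.single (t + 1) ε) - discreteAction L a b y =
      L t (y (t + 1) + ε) (y (t + 1) - y t + ε) + L (t + 1) (y (t + 2)) (y (t + 2) - y (t + 1) - ε)
        - (L t (y (t + 1)) (y (t + 1) - y t) + L (t + 1) (y (t + 2)) (y (t + 2) - y (t + 1))) := by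
  rw [discreteAction, discreteAction, ← sum_sub_distrib,
    sum_eq_add_of_mem t (t + 1) (by simp; omega) (by simp; omega) (by omega)]
  · have h₁ : t + 1 + 1 = t + 2 := by ring
    simp only [Pi.add_apply, h₁, Pi.single_eq_same, Pi.single_eq_of_ne (show t ≠ t + 1 by omega),
      Pi.single_eq_of_ne (show t + 2 ≠ t + 1 by omega), add_zero]
    ring_nf
  · intro s _ ⟨hst, hst₁⟩
    simp [hst₁, show s + 1 ≠ t + 1 by omega]

theorem hasDerivAt_discreteAction_add_single (hat : a ≤ t) (htb : t + 2 ≤ b) (y : ℤ → ℝ)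
    (h₀ : DifferentiableAt ℝ (fun p : ℝ × ℝ => L t p.1 p.2) (y (t + 1), y (t + 1) - y t))
    (h₁ : DifferentiableAt ℝ (fun p : ℝ × ℝ => L (t + 1) p.1 p.2)
      (y (t + 2), y (t + 2) - y (t + 1))) :
    HasDerivAt (fun ε => discreteAction L a b (y + Pi.single (t + 1) ε))
      (deriv (fun u => L t u (y (t + 1) - y t)) (y (t + 1))
        + deriv (fun v => L t (y (t + 1)) v) (y (t + 1) - y t)
        - deriv (fun v => L (t + 1) (y (t + 2)) v) (y (t + 2) - y (t + 1))) 0 := by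
  have hsplit := fun ε => eq_add_of_sub_eq (discreteAction_add_single_sub (L := L) hat htb y ε)
  simp only [hsplit, sub_eq_add_neg _ (deriv _ _)]
  exact (((hasDerivAt_uncurry_diagonal_shift h₀).add (hasDerivAt_uncurry_snd_sub h₁)).sub_const
    _).add_const _

theorem isLocalMin_discreteAction_add_single {ystar : ℤ → ℝ} {δ : ℝ} (hδ : 0 < δ) {c : ℤ}
    (hca : c ≠ a) (hcb : c ≠ b)
    (hmin : ∀ y : ℤ → ℝ, y a = ystar a → y b = ystar b →
      (∀ s ∈ Ico a b, |y (s + 1) - ystar (s + 1)| +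
        |(y (s + 1) - y s) - (ystar (s + 1) - ystar s)| < δ) →
      discreteAction L a b ystar ≤ discreteAction L a b y) :
    IsLocalMin (fun ε => discreteAction L a b (ystar + Pi.single c ε)) 0 := by
  refine Metric.eventually_nhds_iff.2 ⟨δ / 3, by positivity, fun ε hε => ?_⟩
  rw [dist_zero_right, Real.norm_eq_abs] at hε
  simp only [Pi.single_zero, add_zero]
  refine hmin _ (by simp [hca.symm]) (by simp [hcb.symm]) fun s _ => ?_
  set e : ℤ → ℝ := Pi.single c ε
  have he : ∀ r, |e r| ≤ |ε| := fun r => by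
    simp only [e, Pi.single_apply]; split_ifs <;> simp
  simp only [Pi.add_apply, add_sub_cancel_left, add_sub_add_comm]
  linarith [abs_sub (e (s + 1)) (e s), he s, he (s + 1)]

end Variation

theorem discrete_euler_lagrange_general (a b : ℤ)
    (L : ℤ → ℝ → ℝ → ℝ)
    (hL : ∀ t : ℤ, ContDiff ℝ 1 (fun p : ℝ × ℝ => L t p.1 p.2))
    (α β : ℝ) (ystar : ℤ → ℝ) (hya : ystar a = α) (hyb : ystar b = β)
    (hmin : ∃ δ : ℝ, 0 < δ ∧ ∀ y : ℤ → ℝ, y a = α → y b = β →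
      (∀ t ∈ Finset.Ico a b,
        |y (t + 1) - ystar (t + 1)| +
          |(y (t + 1) - y t) - (ystar (t + 1) - ystar t)| < δ) →
      ∑ t ∈ Finset.Ico a b, L t (ystar (t + 1)) (ystar (t + 1) - ystar t) ≤
        ∑ t ∈ Finset.Ico a b, L t (y (t + 1)) (y (t + 1) - y t)) :
    ∀ t : ℤ, a ≤ t → t ≤ b - 2 →
      deriv (fun v => L (t + 1) (ystar (t + 2)) v) (ystar (t + 2) - ystar (t + 1)) -
        deriv (fun v => L t (ystar (t + 1)) v) (ystar (t + 1) - ystar t) =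
      deriv (fun u => L t u (ystar (t + 1) - ystar t)) (ystar (t + 1)) := by
  obtain ⟨δ, hδ, hmin⟩ := hmin
  subst hya hyb
  intro t hat htb
  have hlocal := isLocalMin_discreteAction_add_single (c := t + 1) hδ (by omega) (by omega) hmin
  have hvar := hasDerivAt_discreteAction_add_single (b := b) hat (by omega) ystar
    ((hL t).differentiable one_ne_zero _) ((hL (t + 1)).differentiable one_ne_zero _)
  linarith [hlocal.hasDerivAt_eq_zero hvar]

theorem discrete_euler_lagrange (a b : ℤ) (hab : a + 2 ≤ b)
    (L : ℤ → ℝ → ℝ → ℝ)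
    (hL : ∀ t : ℤ, ContDiff ℝ 1 (fun p : ℝ × ℝ => L t p.1 p.2))
    (α β : ℝ) (ystar : ℤ → ℝ) (hya : ystar a = α) (hyb : ystar b = β)
    (hmin : ∃ δ : ℝ, 0 < δ ∧ ∀ y : ℤ → ℝ, y a = α → y b = β →
      (∀ t ∈ Finset.Ico a b,
        |y (t + 1) - ystar (t + 1)| +
          |(y (t + 1) - y t) - (ystar (t + 1) - ystar t)| < δ) →
      ∑ t ∈ Finset.Ico a b, L t (ystar (t + 1)) (ystar (t + 1) - ystar t) ≤
        ∑ t ∈ Finset.Ico a b, L t (y (t + 1)) (y (t + 1) - y t)) :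
    ∀ t : ℤ, a ≤ t → t ≤ b - 2 →
      deriv (fun v => L (t + 1) (ystar (t + 2)) v) (ystar (t + 2) - ystar (t + 1)) -
        deriv (fun v => L t (ystar (t + 1)) v) (ystar (t + 1) - ystar t) =
      deriv (fun u => L t u (ystar (t + 1) - ystar t)) (ystar (t + 1)) :=
  discrete_euler_lagrange_general a b L hL α β ystar hya hyb hmin
end

section
/- Classical second Noether theorem (simplest case: n = 1, r = 1, m = 0, no time transformation): Let L : ℝ × ℝ × ℝ → ℝ be C², g : [a,b] → ℝ be C¹, and suppose that for every C¹ function y : [a,b] → ℝ and every C¹ function p : [a,b] → ℝ, ∫_a^b L(t, y(t) + g(t)p(t), y'(t) + (g·p)'(t)) dt = ∫_a^b L(t, y(t), y'(t)) dt. Then for every C² function y, the identity g(t)·( ∂L/∂u(t,y(t),y'(t)) − d/dt ∂L/∂v(t,y(t),y'(t)) ) = 0 holds for all t ∈ [a,b]. -/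
/-!
Invariance under `y ↦ y + ε • g φ` makes `ε ↦ ℒ[y + ε g φ]` constant, so its derivative at
`ε = 0`, the first variation `∫ (L_u (g φ) + L_v (g φ)')`, vanishes. When `φ` vanishes at the
endpoints, integration by parts turns this into `∫ g E(L) φ = 0`; as this holds for every smooth
`φ` supported in `(a, b)`, the fundamental lemma of the calculus of variations gives `g E(L) = 0`
on `(a, b)`, hence on `[a, b]` by continuity.
-/

open MeasureTheory Set
open scoped ContDiff

theorem hasDerivAt_intervalIntegral_comp_add_smul {E G : Type*}
    [NormedAddCommGroup E] [NormedSpace ℝ E] [NormedAddCommGroup G] [NormedSpace ℝ G]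
    [CompleteSpace G] {f : E → G} (hf : ContDiff ℝ 1 f) {c w : ℝ → E}
    (hc : Continuous c) (hw : Continuous w) (a b : ℝ) :
    HasDerivAt (fun ε : ℝ => ∫ t in a..b, f (c t + ε • w t))
      (∫ t in a..b, fderiv ℝ f (c t) (w t)) 0 := by
  set γ : ℝ × ℝ → E := fun x => c x.2 + x.1 • w x.2
  have hγ : Continuous γ :=
    (hc.comp continuous_snd).add (continuous_fst.smul (hw.comp continuous_snd))
  set Φ : ℝ × ℝ → G := fun x => fderiv ℝ f (γ x) (w x.2)
  have hΦ : Continuous Φ :=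
    ((hf.continuous_fderiv one_ne_zero).comp hγ).clm_apply (hw.comp continuous_snd)
  obtain ⟨C, hC⟩ := ((isCompact_closedBall (0 : ℝ) 1).prod
    isCompact_uIcc).exists_bound_of_continuousOn hΦ.continuousOn
  have hF : ∀ ε, Continuous fun t => f (γ (ε, t)) := fun ε =>
    hf.continuous.comp (hγ.comp (continuous_const.prodMk continuous_id))
  have hderiv : ∀ ε t, HasDerivAt (fun ε => f (γ (ε, t))) (Φ (ε, t)) ε := fun ε t => by
    have hline : HasDerivAt (fun ε : ℝ => c t + ε • w t) (w t) ε := by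
      simpa using ((hasDerivAt_id ε).smul_const (w t)).const_add (c t)
    exact (hf.differentiable one_ne_zero _).hasFDerivAt.comp_hasDerivAt ε hline
  have hdom := intervalIntegral.hasDerivAt_integral_of_dominated_loc_of_deriv_le
    (F := fun ε t => f (γ (ε, t))) (F' := fun ε t => Φ (ε, t)) (bound := fun _ => C)
    (μ := volume) (Metric.ball_mem_nhds 0 one_pos)
    (.of_forall fun ε => (hF ε).aestronglyMeasurable) ((hF 0).intervalIntegrable a b)
    (hΦ.comp (continuous_const.prodMk continuous_id)).aestronglyMeasurable
    (.of_forall fun t ht ε hε =>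
      hC (ε, t) ⟨Metric.ball_subset_closedBall hε, uIoc_subset_uIcc ht⟩)
    intervalIntegrable_const (.of_forall fun t _ ε _ => hderiv ε t)
  simpa [γ, Φ] using hdom.2

theorem integral_mul_add_mul_deriv_eq_integral_sub_deriv_mul {a b : ℝ} {A Λ q : ℝ → ℝ}
    (hA : ContinuousOn A (uIcc a b)) (hΛ : ContDiff ℝ 1 Λ) (hq : ContDiff ℝ 1 q)
    (ha : q a = 0) (hb : q b = 0) :
    ∫ t in a..b, (A t * q t + Λ t * deriv q t) = ∫ t in a..b, (A t - deriv Λ t) * q t := by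
  have hΛ' : Continuous (deriv Λ) := hΛ.continuous_deriv le_rfl
  have hq' : Continuous (deriv q) := hq.continuous_deriv le_rfl
  have hAq : IntervalIntegrable (fun t => A t * q t) volume a b :=
    (hA.mul hq.continuous.continuousOn).intervalIntegrable
  have hΛq' : IntervalIntegrable (fun t => Λ t * deriv q t) volume a b :=
    (hΛ.continuous.mul hq').intervalIntegrable a b
  have hΛ'q : IntervalIntegrable (fun t => deriv Λ t * q t) volume a b :=
    (hΛ'.mul hq.continuous).intervalIntegrable a b
  have hparts : ∫ t in a..b, Λ t * deriv q t = -∫ t in a..b, deriv Λ t * q t := by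
    rw [intervalIntegral.integral_mul_deriv_eq_deriv_mul
      (fun t _ => (hΛ.differentiable one_ne_zero t).hasDerivAt)
      (fun t _ => (hq.differentiable one_ne_zero t).hasDerivAt)
      (hΛ'.intervalIntegrable a b) (hq'.intervalIntegrable a b), ha, hb]
    ring
  simp only [sub_mul]
  rw [intervalIntegral.integral_add hAq hΛq', intervalIntegral.integral_sub hAq hΛ'q, hparts,
    sub_eq_add_neg]

theorem eqOn_zero_of_intervalIntegral_mul_eq_zero {a b : ℝ} (hab : a < b) {f : ℝ → ℝ}
    (hf : ContinuousOn f (Icc a b))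
    (h : ∀ φ : ℝ → ℝ, ContDiff ℝ ∞ φ → tsupport φ ⊆ Ioo a b → ∫ t in a..b, f t * φ t = 0) :
    EqOn f 0 (Icc a b) := by
  have hf' : ContinuousOn f (Ioo a b) := hf.mono Ioo_subset_Icc_self
  have hae : ∀ᵐ t, t ∈ Ioo a b → f t = 0 :=
    isOpen_Ioo.ae_eq_zero_of_integral_contDiff_smul_eq_zero
      (hf'.locallyIntegrableOn measurableSet_Ioo) fun φ hφ _ hsupp => by
        rw [← h φ hφ hsupp, intervalIntegral.integral_of_le hab.le,
          setIntegral_eq_integral_of_forall_compl_eq_zero]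
        · simp only [smul_eq_mul, mul_comm]
        · intro t ht
          rw [image_eq_zero_of_notMem_tsupport fun h' => ht (Ioo_subset_Ioc_self (hsupp h')),
            mul_zero]
  have hIoo : EqOn f 0 (Ioo a b) :=
    Measure.eqOn_open_of_ae_eq ((ae_restrict_iff' measurableSet_Ioo).2 hae) isOpen_Ioo hf'
      continuousOn_const
  exact hIoo.of_subset_closure hf continuousOn_const Ioo_subset_Icc_self (closure_Ioo hab.ne).ge

section Lagrangian

def uncurry₃ (L : ℝ → ℝ → ℝ → ℝ) : ℝ × ℝ × ℝ → ℝ := fun p => L p.1 p.2.1 p.2.2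

variable {L : ℝ → ℝ → ℝ → ℝ}

theorem deriv_slice_snd_eq_fderiv {t u v : ℝ}
    (hL : DifferentiableAt ℝ (uncurry₃ L) (t, u, v)) :
    deriv (fun u => L t u v) u = fderiv ℝ (uncurry₃ L) (t, u, v) (0, 1, 0) :=
  (hL.hasFDerivAt.comp_hasDerivAt (f := fun u => (t, u, v)) u
    ((hasDerivAt_const u t).prodMk ((hasDerivAt_id u).prodMk (hasDerivAt_const u v)))).deriv

theorem deriv_slice_thd_eq_fderiv {t u v : ℝ}
    (hL : DifferentiableAt ℝ (uncurry₃ L) (t, u, v)) :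
    deriv (fun v => L t u v) v = fderiv ℝ (uncurry₃ L) (t, u, v) (0, 0, 1) :=
  (hL.hasFDerivAt.comp_hasDerivAt (f := fun v => (t, u, v)) v
    ((hasDerivAt_const v t).prodMk ((hasDerivAt_const v u).prodMk (hasDerivAt_id v)))).deriv

theorem fderiv_uncurry₃_apply_zero_fst {t u v : ℝ}
    (hL : DifferentiableAt ℝ (uncurry₃ L) (t, u, v)) (α β : ℝ) :
    fderiv ℝ (uncurry₃ L) (t, u, v) (0, α, β) =
      deriv (fun u => L t u v) u * α + deriv (fun v => L t u v) v * β := by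
  have hdecomp : ((0 : ℝ), α, β) = α • (0, 1, 0) + β • (0, 0, 1) := by simp
  rw [deriv_slice_snd_eq_fderiv hL, deriv_slice_thd_eq_fderiv hL, hdecomp, map_add, map_smul,
    map_smul, smul_eq_mul, smul_eq_mul, mul_comm α, mul_comm β]

theorem ContDiff.deriv_slice_snd {m n : WithTop ℕ∞}
    (hL : ContDiff ℝ n (uncurry₃ L)) (hmn : m + 1 ≤ n)
    {y z : ℝ → ℝ} (hy : ContDiff ℝ m y) (hz : ContDiff ℝ m z) :
    ContDiff ℝ m fun s => deriv (fun u => L s u (z s)) (y s) := by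
  have hL1 : Differentiable ℝ (uncurry₃ L) :=
    hL.differentiable (ne_bot_of_le_ne_bot one_ne_zero (le_add_self.trans hmn))
  simp_rw [deriv_slice_snd_eq_fderiv (hL1 _)]
  exact ((hL.fderiv_right hmn).clm_apply contDiff_const).comp
    (contDiff_id.prodMk (hy.prodMk hz))

theorem ContDiff.deriv_slice_thd {m n : WithTop ℕ∞}
    (hL : ContDiff ℝ n (uncurry₃ L)) (hmn : m + 1 ≤ n)
    {y z : ℝ → ℝ} (hy : ContDiff ℝ m y) (hz : ContDiff ℝ m z) :
    ContDiff ℝ m fun s => deriv (fun v => L s (y s) v) (z s) := by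
  have hL1 : Differentiable ℝ (uncurry₃ L) :=
    hL.differentiable (ne_bot_of_le_ne_bot one_ne_zero (le_add_self.trans hmn))
  simp_rw [deriv_slice_thd_eq_fderiv (hL1 _)]
  exact ((hL.fderiv_right hmn).clm_apply contDiff_const).comp
    (contDiff_id.prodMk (hy.prodMk hz))

theorem intervalIntegral_first_variation_eq_zero {a b : ℝ}
    (hL : ContDiff ℝ 1 (uncurry₃ L)) {y q : ℝ → ℝ}
    (hy : ContDiff ℝ 1 y) (hq : ContDiff ℝ 1 q)
    (hstat : ∀ ε : ℝ, ∫ t in a..b, L t (y t + ε * q t) (deriv y t + ε * deriv q t) =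
      ∫ t in a..b, L t (y t) (deriv y t)) :
    ∫ t in a..b, (deriv (fun u => L t u (deriv y t)) (y t) * q t +
      deriv (fun v => L t (y t) v) (deriv y t) * deriv q t) = 0 := by
  have hvar := hasDerivAt_intervalIntegral_comp_add_smul hL
    (c := fun t => (t, y t, deriv y t)) (w := fun t => (0, q t, deriv q t))
    (continuous_id.prodMk (hy.continuous.prodMk (hy.continuous_deriv le_rfl)))
    (continuous_const.prodMk (hq.continuous.prodMk (hq.continuous_deriv le_rfl))) a b
  simp only [uncurry₃, Prod.smul_mk, smul_eq_mul, mul_zero, add_zero, Prod.mk_add_mk, hstat,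
    fderiv_uncurry₃_apply_zero_fst ((hL.differentiable one_ne_zero) _)] at hvar
  exact hvar.unique (hasDerivAt_const 0 _)

end Lagrangian

theorem classical_second_noether_m0 (a b : ℝ) (hab : a < b)
    (L : ℝ → ℝ → ℝ → ℝ)
    (hL : ContDiff ℝ 2 (fun p : ℝ × ℝ × ℝ => L p.1 p.2.1 p.2.2))
    (g : ℝ → ℝ) (hg : ContDiff ℝ 1 g)
    (hinv : ∀ y p : ℝ → ℝ, ContDiff ℝ 1 y → ContDiff ℝ 1 p →
      ∫ t in a..b, L t (y t + g t * p t)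
          (deriv y t + deriv (fun s => g s * p s) t) =
        ∫ t in a..b, L t (y t) (deriv y t)) :
    ∀ y : ℝ → ℝ, ContDiff ℝ 2 y → ∀ t ∈ Set.Icc a b,
      g t * (deriv (fun u => L t u (deriv y t)) (y t) -
        deriv (fun s => deriv (fun v => L s (y s) v) (deriv y s)) t) = 0 := by
  intro y hy
  have hy1 : ContDiff ℝ 1 y := hy.of_le one_le_two
  have hy' : ContDiff ℝ 1 (deriv y) := hy.deriv'
  have hLu : Continuous fun s => deriv (fun u => L s u (deriv y s)) (y s) :=
    (hL.deriv_slice_snd (m := 0) (by norm_num) (hy1.of_le zero_le_one)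
      (hy'.of_le zero_le_one)).continuous
  have hLv : ContDiff ℝ 1 fun s => deriv (fun v => L s (y s) v) (deriv y s) :=
    hL.deriv_slice_thd le_rfl hy1 hy'
  refine eqOn_zero_of_intervalIntegral_mul_eq_zero hab
    (hg.continuous.mul (hLu.sub (hLv.continuous_deriv le_rfl))).continuousOn
    fun φ hφ hsupp => ?_
  have hφ1 : ContDiff ℝ 1 φ := hφ.of_le (by simp)
  have hφa : φ a = 0 := image_eq_zero_of_notMem_tsupport fun h => lt_irrefl a (hsupp h).1
  have hφb : φ b = 0 := image_eq_zero_of_notMem_tsupport fun h => lt_irrefl b (hsupp h).2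
  have hq : ContDiff ℝ 1 fun s => g s * φ s := hg.mul hφ1
  have hstat : ∀ ε : ℝ,
      ∫ t in a..b, L t (y t + ε * (g t * φ t)) (deriv y t + ε * deriv (fun s => g s * φ s) t) =
        ∫ t in a..b, L t (y t) (deriv y t) := fun ε => by
    rw [← hinv y (fun s => ε * φ s) hy1 (contDiff_const.mul hφ1)]
    have hscale : (fun s => g s * (ε * φ s)) = fun s => ε * (g s * φ s) := by ext; ring
    simp_rw [hscale, deriv_const_mul_field', mul_left_comm (g _) ε]
  have hfirst := intervalIntegral_first_variation_eq_zero (hL.of_le one_le_two) hy1 hq hstat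
  rw [integral_mul_add_mul_deriv_eq_integral_sub_deriv_mul hLu.continuousOn hLv hq
    (by simp [hφa]) (by simp [hφb])] at hfirst
  rw [← hfirst]
  congr 1 with s
  ring
end

section
/- Classical second Noether theorem (n = 1, r = 1, m = 1, no time transformation): Let L : ℝ × ℝ × ℝ → ℝ be C², and g₀, g₁ : [a,b] → ℝ be C². Suppose that for every C² function y : [a,b] → ℝ and every C² function p : [a,b] → ℝ, the functional ℒ[y] = ∫_a^b L(t, y(t), y'(t)) dt satisfies ℒ[y + g₀·p + g₁·p'] = ℒ[y]. Then for every C³ function y, the identity g₀(t)·E(L)(t) − d/dt( g₁(t)·E(L)(t) ) = 0 holds for all t ∈ [a,b], where E(L)(t) = ∂L/∂u(t,y(t),y'(t)) − d/dt ∂L/∂v(t,y(t),y'(t)). -/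
/-!
Write `E` for the Euler–Lagrange expression along `y` and `w = ∂L/∂v` along `y`. Invariance under
`y ↦ y + ε (g₀ p + g₁ p')` kills the first variation, and one integration by parts turns this into
`∫ₐᵇ (g₀ p + g₁ p') E = [(g₀ p + g₁ p') w]` at the endpoints, for every `C²` function `p`.

For `p` flat at both endpoints this says that `(g₁ E)' = g₀ E` weakly, i.e. that
`∫ₐᵇ p' ψ = 0` for `ψ = g₁ E - ∫ₐ g₀ E`. Since the test functions must be `C²`, the du Bois-Reymond
argument is run one primitive higher: every continuous `r` orthogonal to the affine functions is
`p''` for such a `p`, so the primitive `Ψ` of `ψ` is orthogonal to all these `r`, hence affine, and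
`ψ` is constant on `[a, b]`. This proves the identity wherever `g₁ E` is differentiable.
Elsewhere `deriv` is `0`, which can only happen at an endpoint where `g₁ ≠ 0`; testing the boundary
terms against `(s - d)²` and `(s - d)³`, `d` the other endpoint, shows that `E` vanishes there.
-/

open Set Filter MeasureTheory intervalIntegral

theorem eqOn_zero_of_integral_eq_zero {f : ℝ → ℝ} {a b : ℝ} (hab : a < b) (hf : Continuous f)
    (hf₀ : ∀ x, 0 ≤ f x) (h : ∫ x in a..b, f x = 0) : EqOn f 0 (Icc a b) := by
  have hae := (integral_eq_zero_iff_of_le_of_nonneg_ae hab.le (ae_of_all _ hf₀)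
    (hf.intervalIntegrable a b)).1 h
  exact Measure.eqOn_Icc_of_ae_eq volume hab.ne
    ((ae_restrict_congr_set Ioc_ae_eq_Icc).1 hae) hf.continuousOn continuousOn_const

theorem HasDerivAt.unique_of_eqOn_Icc {f g : ℝ → ℝ} {f' g' a b t : ℝ} (hab : a < b)
    (hfg : EqOn f g (Icc a b)) (ht : t ∈ Icc a b) (hf : HasDerivAt f f' t)
    (hg : HasDerivAt g g' t) : f' = g' :=
  (uniqueDiffOn_Icc hab t ht).eq_deriv _ hf.hasDerivWithinAt
    (hg.hasDerivWithinAt.congr hfg (hfg ht))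

theorem exists_eqOn_affine_of_integral_mul_eq_zero {a b : ℝ} (hab : a < b) {Ψ : ℝ → ℝ}
    (hΨ : Continuous Ψ)
    (h : ∀ r : ℝ → ℝ, Continuous r → ∫ s in a..b, r s = 0 → ∫ s in a..b, s * r s = 0 →
      ∫ s in a..b, r s * Ψ s = 0) :
    ∃ α β : ℝ, EqOn Ψ (fun s => α * s + β) (Icc a b) := by
  have hba : b - a ≠ 0 := sub_ne_zero.2 hab.ne'
  set m := (a + b) / 2
  have hI₁ : ∫ s in a..b, (s - m) = 0 := by
    simp [integral_comp_sub_right (fun s => s), m]; ring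
  have hI₂ : ∫ s in a..b, (s - m) ^ 2 = (b - a) ^ 3 / 12 := by
    simp [integral_comp_sub_right (fun s => s ^ 2), m]; ring
  -- `α (s - m) + β` is the L² projection of `Ψ` on the affine functions (`1 ⊥ s - m`)
  set α := (∫ s in a..b, (s - m) * Ψ s) / ((b - a) ^ 3 / 12)
  set β := (∫ s in a..b, Ψ s) / (b - a)
  set r := fun s => Ψ s - (α * (s - m) + β)
  have hr : Continuous r := by fun_prop
  have hr₀ : ∫ s in a..b, r s = 0 := by
    simp only [r]
    rw [integral_sub (hΨ.intervalIntegrable a b) (Continuous.intervalIntegrable (by fun_prop) a b),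
      integral_add (Continuous.intervalIntegrable (by fun_prop) a b) intervalIntegrable_const,
      intervalIntegral.integral_const_mul, hI₁]
    simp only [β, intervalIntegral.integral_const, smul_eq_mul]
    field_simp
    ring
  have hr₁ : ∫ s in a..b, (s - m) * r s = 0 := by
    have : (fun s => (s - m) * r s) = fun s => (s - m) * Ψ s - (α * (s - m) ^ 2 + β * (s - m)) := by
      ext s; simp only [r]; ring
    rw [this, integral_sub (Continuous.intervalIntegrable (by fun_prop) a b)
      (Continuous.intervalIntegrable (by fun_prop) a b),
      integral_add (Continuous.intervalIntegrable (by fun_prop) a b)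
        (Continuous.intervalIntegrable (by fun_prop) a b),
      intervalIntegral.integral_const_mul, intervalIntegral.integral_const_mul, hI₁, hI₂]
    simp only [α]
    field_simp
    ring
  have hrs : ∫ s in a..b, s * r s = 0 := by
    have : (fun s => s * r s) = fun s => (s - m) * r s + m * r s := by
      ext s; ring
    rw [this, integral_add (Continuous.intervalIntegrable (by fun_prop) a b)
      (Continuous.intervalIntegrable (by fun_prop) a b), intervalIntegral.integral_const_mul,
      hr₀, hr₁]
    ring
  have hr₂ : ∫ s in a..b, r s ^ 2 = 0 := by
    have : (fun s => r s ^ 2) = fun s => r s * Ψ s - (α * ((s - m) * r s) + β * r s) := by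
      ext s; simp only [r]; ring
    rw [this, integral_sub (Continuous.intervalIntegrable (by fun_prop) a b)
      (Continuous.intervalIntegrable (by fun_prop) a b),
      integral_add (Continuous.intervalIntegrable (by fun_prop) a b)
        (Continuous.intervalIntegrable (by fun_prop) a b),
      intervalIntegral.integral_const_mul, intervalIntegral.integral_const_mul, hr₁, hr₀,
      h r hr hr₀ hrs]
    ring
  refine ⟨α, β - α * m, fun s hs => ?_⟩
  have hrs₀ := eqOn_zero_of_integral_eq_zero hab (f := fun s => r s ^ 2) (by fun_prop)
    (fun s => sq_nonneg _) hr₂ hs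
  simp only [Pi.zero_apply, pow_eq_zero_iff two_ne_zero, r] at hrs₀
  linarith

theorem exists_contDiff_two_deriv_deriv_eq {a b : ℝ} {r : ℝ → ℝ} (hr : Continuous r)
    (h₀ : ∫ s in a..b, r s = 0) (h₁ : ∫ s in a..b, s * r s = 0) :
    ∃ P : ℝ → ℝ, ContDiff ℝ 2 P ∧ P a = 0 ∧ P b = 0 ∧ deriv P a = 0 ∧ deriv P b = 0 ∧
      ∀ s, HasDerivAt (deriv P) (r s) s := by
  set q := fun s => ∫ τ in a..s, r τ
  have hq : ∀ s, HasDerivAt q (r s) s := fun s => (hr.integral_hasStrictDerivAt a s).hasDerivAt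
  have hqc : Continuous q := continuous_iff_continuousAt.2 fun s => (hq s).continuousAt
  set P := fun s => ∫ τ in a..s, q τ
  have hP : ∀ s, HasDerivAt P (q s) s := fun s => (hqc.integral_hasStrictDerivAt a s).hasDerivAt
  have hP' : deriv P = q := funext fun s => (hP s).deriv
  have hPb : P b = 0 := by
    have hparts := integral_mul_deriv_eq_deriv_mul (fun x _ => hasDerivAt_id x) (fun x _ => hq x)
      intervalIntegrable_const (hr.intervalIntegrable a b)
    simp only [id, one_mul, h₁, h₀, q, integral_same] at hparts
    linarith
  refine ⟨P, ?_, integral_same, hPb, by simp [hP', q], by simp [hP', q, h₀],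
    by simpa [hP'] using hq⟩
  rw [show (2 : WithTop ℕ∞) = 1 + 1 from rfl, contDiff_succ_iff_deriv, hP']
  refine ⟨fun s => (hP s).differentiableAt, by simp, ?_⟩
  rw [show (1 : WithTop ℕ∞) = 0 + 1 from rfl, contDiff_succ_iff_deriv]
  exact ⟨fun s => (hq s).differentiableAt, by simp,
    contDiff_zero.2 (by simpa [funext fun s => (hq s).deriv] using hr)⟩

/-- The du Bois-Reymond lemma. -/
theorem exists_eqOn_const_of_integral_deriv_mul_eq_zero {a b : ℝ} (hab : a < b) {ψ : ℝ → ℝ}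
    (hψ : Continuous ψ)
    (h : ∀ p : ℝ → ℝ, ContDiff ℝ 2 p → p a = 0 → p b = 0 → deriv p a = 0 → deriv p b = 0 →
      ∫ s in a..b, deriv p s * ψ s = 0) :
    ∃ A : ℝ, EqOn ψ (fun _ => A) (Icc a b) := by
  set Ψ := fun s => ∫ τ in a..s, ψ τ
  have hΨ : ∀ s, HasDerivAt Ψ (ψ s) s := fun s => (hψ.integral_hasStrictDerivAt a s).hasDerivAt
  have hΨc : Continuous Ψ := continuous_iff_continuousAt.2 fun s => (hΨ s).continuousAt
  obtain ⟨α, β, hαβ⟩ := exists_eqOn_affine_of_integral_mul_eq_zero hab hΨc fun r hr h₀ h₁ => by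
    obtain ⟨P, hP, hPa, hPb, hP'a, hP'b, hP''⟩ := exists_contDiff_two_deriv_deriv_eq hr h₀ h₁
    have hparts := integral_mul_deriv_eq_deriv_mul (fun x _ => hP'' x) (fun x _ => hΨ x)
      (hr.intervalIntegrable a b) (hψ.intervalIntegrable a b)
    rw [h P hP hPa hPb hP'a hP'b, hP'a, hP'b] at hparts
    linarith
  refine ⟨α, fun s hs => (hΨ s).unique_of_eqOn_Icc hab hαβ hs ?_⟩
  simpa using ((hasDerivAt_id s).const_mul α).add_const β

theorem exists_eqOn_integral_add_const_of_integral_eq_zero {a b : ℝ} (hab : a < b)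
    {f h : ℝ → ℝ} (hf : Continuous f) (hh : Continuous h)
    (hweak : ∀ p : ℝ → ℝ, ContDiff ℝ 2 p → p a = 0 → p b = 0 → deriv p a = 0 → deriv p b = 0 →
      ∫ s in a..b, p s * f s + deriv p s * h s = 0) :
    ∃ A : ℝ, EqOn h (fun s => (∫ τ in a..s, f τ) + A) (Icc a b) := by
  set F := fun s => ∫ τ in a..s, f τ
  have hF : ∀ s, HasDerivAt F (f s) s := fun s => (hf.integral_hasStrictDerivAt a s).hasDerivAt
  have hFc : Continuous F := continuous_iff_continuousAt.2 fun s => (hF s).continuousAt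
  obtain ⟨A, hA⟩ := exists_eqOn_const_of_integral_deriv_mul_eq_zero hab (hh.sub hFc)
    fun p hp hpa hpb hp'a hp'b => by
      have hp' : Continuous (deriv p) := hp.continuous_deriv one_le_two
      have hparts := integral_deriv_mul_eq_sub
        (fun x _ => (hp.differentiable two_ne_zero x).hasDerivAt) (fun x _ => hF x)
        (hp'.intervalIntegrable a b) (hf.intervalIntegrable a b)
      rw [hpa, hpb, zero_mul, zero_mul, sub_zero] at hparts
      have hpc : Continuous p := hp.continuous
      calc ∫ s in a..b, deriv p s * (h s - F s)
          = (∫ s in a..b, p s * f s + deriv p s * h s) -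
              ∫ s in a..b, deriv p s * F s + p s * f s := by
            rw [← integral_sub (Continuous.intervalIntegrable (by fun_prop) a b)
              (Continuous.intervalIntegrable (by fun_prop) a b)]
            congr 1; ext s; ring
        _ = 0 := by rw [hweak p hp hpa hpb hp'a hp'b, hparts, sub_zero]
  exact ⟨A, fun s hs => eq_add_of_sub_eq' (hA hs)⟩

theorem HasDerivAt.mul_continuousAt_of_eq_zero {f g : ℝ → ℝ} {f' x : ℝ} (hf : HasDerivAt f f' x)
    (hfx : f x = 0) (hg : ContinuousAt g x) : HasDerivAt (fun s => f s * g s) (f' * g x) x := by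
  rw [hasDerivAt_iff_tendsto_slope] at hf ⊢
  refine (hf.mul (hg.tendsto.mono_left nhdsWithin_le_nhds)).congr fun s => ?_
  simp only [slope_def_field, hfx, zero_mul, sub_zero]
  ring

theorem eq_zero_of_forall_contDiff_flat {c d α β : ℝ} (hcd : c ≠ d)
    (h : ∀ p : ℝ → ℝ, ContDiff ℝ 2 p → p d = 0 → deriv p d = 0 → α * p c + β * deriv p c = 0) :
    α = 0 ∧ β = 0 := by
  have h₂ : α * (c - d) ^ 2 + β * (2 * (c - d)) = 0 := by
    have := h (fun s => (s - d) ^ 2) (by fun_prop) (by simp) (by simp)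
    simpa using this
  have h₃ : α * (c - d) ^ 3 + β * (3 * (c - d) ^ 2) = 0 := by
    have := h (fun s => (s - d) ^ 3) (by fun_prop) (by simp) (by simp)
    simpa using this
  have hcd' : (c - d) ^ 2 ≠ 0 := pow_ne_zero 2 (sub_ne_zero.2 hcd)
  have hβ : β = 0 := (mul_eq_zero.1 (by linear_combination h₃ - (c - d) * h₂)).resolve_right hcd'
  exact ⟨(mul_eq_zero.1 (by linear_combination h₂ - 2 * (c - d) * hβ)).resolve_right hcd', hβ⟩

theorem integral_mul_add_deriv_mul_eq_of_eqOn {a b A : ℝ} (hab : a ≤ b) {f h p : ℝ → ℝ}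
    (hf : Continuous f) (hp : ContDiff ℝ 1 p)
    (hh : EqOn h (fun s => (∫ τ in a..s, f τ) + A) (Icc a b)) :
    ∫ s in a..b, p s * f s + deriv p s * h s = p b * h b - p a * h a := by
  set F := fun s => (∫ τ in a..s, f τ) + A
  have hF : ∀ s, HasDerivAt F (f s) s := fun s =>
    (hf.integral_hasStrictDerivAt a s).hasDerivAt.add_const A
  rw [hh ⟨le_rfl, hab⟩, hh ⟨hab, le_rfl⟩, ← integral_deriv_mul_eq_sub
    (fun x _ => (hp.differentiable one_ne_zero x).hasDerivAt) (fun x _ => hF x)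
    ((hp.continuous_deriv le_rfl).intervalIntegrable a b) (hf.intervalIntegrable a b)]
  refine integral_congr fun s hs => ?_
  rw [uIcc_of_le hab] at hs
  simp only [hh hs]
  ring

theorem noether_dependency {a b : ℝ} (hab : a < b) {g₀ g₁ E w : ℝ → ℝ} (hg₀ : Continuous g₀)
    (hg₁ : Differentiable ℝ g₁) (hE : Continuous E)
    (hvar : ∀ p : ℝ → ℝ, ContDiff ℝ 2 p → ∫ s in a..b, (g₀ s * p s + g₁ s * deriv p s) * E s =
      (g₀ a * p a + g₁ a * deriv p a) * w a - (g₀ b * p b + g₁ b * deriv p b) * w b) :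
    ∀ t ∈ Icc a b, g₀ t * E t - deriv (fun s => g₁ s * E s) t = 0 := by
  have hvar' : ∀ p : ℝ → ℝ, ContDiff ℝ 2 p →
      ∫ s in a..b, p s * (g₀ s * E s) + deriv p s * (g₁ s * E s) =
        (g₀ a * p a + g₁ a * deriv p a) * w a - (g₀ b * p b + g₁ b * deriv p b) * w b :=
    fun p hp => by rw [← hvar p hp]; congr 1; ext s; ring
  obtain ⟨A, hA⟩ := exists_eqOn_integral_add_const_of_integral_eq_zero hab (hg₀.fun_mul hE)
    (hg₁.continuous.fun_mul hE) fun p hp hpa hpb hp'a hp'b => by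
      simp [hvar' p hp, hpa, hpb, hp'a, hp'b]
  have hbdry : ∀ p : ℝ → ℝ, ContDiff ℝ 2 p → p b * (g₁ b * E b) - p a * (g₁ a * E a) =
      (g₀ a * p a + g₁ a * deriv p a) * w a - (g₀ b * p b + g₁ b * deriv p b) * w b :=
    fun p hp => by
      rw [← hvar' p hp, integral_mul_add_deriv_mul_eq_of_eqOn hab.le (hg₀.fun_mul hE)
        (hp.of_le one_le_two) hA]
  have hend : ∀ c d, c ≠ d → (∀ p : ℝ → ℝ, ContDiff ℝ 2 p → p d = 0 → deriv p d = 0 →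
      (g₁ c * E c + g₀ c * w c) * p c + g₁ c * w c * deriv p c = 0) → g₁ c ≠ 0 → E c = 0 := by
    intro c d hcd hflat hc
    obtain ⟨h₀, h₁⟩ := eq_zero_of_forall_contDiff_flat hcd hflat
    have hw : w c = 0 := (mul_eq_zero.1 h₁).resolve_left hc
    rw [hw, mul_zero, add_zero] at h₀
    exact (mul_eq_zero.1 h₀).resolve_left hc
  have hEa : g₁ a ≠ 0 → E a = 0 := hend a b hab.ne fun p hp hpb hp'b => by
    linear_combination -(hbdry p hp) + (w b * g₀ b + E b * g₁ b) * hpb + g₁ b * w b * hp'b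
  have hEb : g₁ b ≠ 0 → E b = 0 := hend b a hab.ne' fun p hp hpa hp'a => by
    linear_combination (hbdry p hp) + (w a * g₀ a + E a * g₁ a) * hpa + g₁ a * w a * hp'a
  intro t ht
  have hG : HasDerivAt (fun s => (∫ τ in a..s, g₀ τ * E τ) + A) (g₀ t * E t) t :=
    ((hg₀.fun_mul hE).integral_hasStrictDerivAt a t).hasDerivAt.add_const A
  by_cases hd : DifferentiableAt ℝ (fun s => g₁ s * E s) t
  · rw [hd.hasDerivAt.unique_of_eqOn_Icc hab hA ht hG, sub_self]
  have hendpt : t = a ∨ t = b := by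
    by_contra! hne
    have hint : t ∈ Ioo a b := ⟨lt_of_le_of_ne ht.1 hne.1.symm, lt_of_le_of_ne ht.2 hne.2⟩
    exact hd (hG.congr_of_eventuallyEq (eventuallyEq_of_mem (Ioo_mem_nhds hint.1 hint.2)
      fun s hs => hA (Ioo_subset_Icc_self hs))).differentiableAt
  have hg₁t : g₁ t ≠ 0 := fun h0 =>
    hd ((hg₁ t).hasDerivAt.mul_continuousAt_of_eq_zero h0 hE.continuousAt).differentiableAt
  have hEt : E t = 0 := by rcases hendpt with rfl | rfl <;> [exact hEa hg₁t; exact hEb hg₁t]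
  rw [hEt, deriv_zero_of_not_differentiableAt hd, mul_zero, sub_zero]

theorem hasDerivAt_integral_comp_add_smul {F : Type*} [NormedAddCommGroup F] [NormedSpace ℝ F]
    {Φ : F → ℝ} (hΦ : ContDiff ℝ 1 Φ) {c v : ℝ → F} (hc : Continuous c) (hv : Continuous v)
    (a b : ℝ) :
    HasDerivAt (fun ε : ℝ => ∫ t in a..b, Φ (c t + ε • v t))
      (∫ t in a..b, fderiv ℝ Φ (c t) (v t)) 0 := by
  have hΦ' : Continuous (fderiv ℝ Φ) := hΦ.continuous_fderiv one_ne_zero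
  have hΦd : Differentiable ℝ Φ := hΦ.differentiable one_ne_zero
  obtain ⟨M, hM⟩ := (isCompact_closedBall (0 : ℝ) 1 |>.prod (isCompact_uIcc (a := a) (b := b)))
    |>.exists_bound_of_continuousOn (f := fun q : ℝ × ℝ => fderiv ℝ Φ (c q.2 + q.1 • v q.2) (v q.2))
    (Continuous.continuousOn (by fun_prop))
  have h := hasDerivAt_integral_of_dominated_loc_of_deriv_le (μ := volume)
    (F := fun ε t => Φ (c t + ε • v t)) (F' := fun ε t => fderiv ℝ Φ (c t + ε • v t) (v t))
    (bound := fun _ => M) (x₀ := 0) (Metric.ball_mem_nhds 0 one_pos)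
    (Eventually.of_forall fun ε => (Continuous.aestronglyMeasurable (by fun_prop)))
    (Continuous.intervalIntegrable (by fun_prop) a b)
    (Continuous.aestronglyMeasurable (by fun_prop))
    (ae_of_all _ fun t ht ε hε =>
      hM (ε, t) ⟨Metric.ball_subset_closedBall hε, uIoc_subset_uIcc ht⟩)
    intervalIntegrable_const
    (ae_of_all _ fun t _ ε _ => by
      have hline := ((hasDerivAt_id ε).smul_const (v t)).const_add (c t)
      simp only [id, one_smul] at hline
      exact (hΦd _).hasFDerivAt.comp_hasDerivAt ε hline)
  simpa using h.2

theorem fderiv_uncurry_apply {L : ℝ → ℝ → ℝ → ℝ} {s u v : ℝ}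
    (hL : DifferentiableAt ℝ (fun q : ℝ × ℝ × ℝ => L q.1 q.2.1 q.2.2) (s, u, v)) (x z : ℝ) :
    fderiv ℝ (fun q : ℝ × ℝ × ℝ => L q.1 q.2.1 q.2.2) (s, u, v) (0, x, z) =
      x * deriv (fun u => L s u v) u + z * deriv (fun v => L s u v) v := by
  have hu : HasDerivAt (fun u => L s u v)
      (fderiv ℝ (fun q : ℝ × ℝ × ℝ => L q.1 q.2.1 q.2.2) (s, u, v) (0, 1, 0)) u :=
    hL.hasFDerivAt.comp_hasDerivAt (f := fun u => (s, u, v)) u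
      ((hasDerivAt_const u s).prodMk ((hasDerivAt_id u).prodMk (hasDerivAt_const u v)))
  have hv : HasDerivAt (fun v => L s u v)
      (fderiv ℝ (fun q : ℝ × ℝ × ℝ => L q.1 q.2.1 q.2.2) (s, u, v) (0, 0, 1)) v :=
    hL.hasFDerivAt.comp_hasDerivAt (f := fun v => (s, u, v)) v
      ((hasDerivAt_const v s).prodMk ((hasDerivAt_const v u).prodMk (hasDerivAt_id v)))
  have hxz : ((0 : ℝ), x, z) = x • ((0 : ℝ), (1 : ℝ), (0 : ℝ)) + z • ((0 : ℝ), (0 : ℝ), (1 : ℝ)) :=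
    by simp
  rw [hu.deriv, hv.deriv, hxz, map_add, map_smul, map_smul, smul_eq_mul, smul_eq_mul]

noncomputable def partialU (L : ℝ → ℝ → ℝ → ℝ) (y : ℝ → ℝ) (t : ℝ) : ℝ :=
  deriv (fun u => L t u (deriv y t)) (y t)

noncomputable def partialV (L : ℝ → ℝ → ℝ → ℝ) (y : ℝ → ℝ) (t : ℝ) : ℝ :=
  deriv (fun v => L t (y t) v) (deriv y t)

noncomputable def eulerLagrange (L : ℝ → ℝ → ℝ → ℝ) (y : ℝ → ℝ) (t : ℝ) : ℝ :=
  partialU L y t - deriv (partialV L y) t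

section

variable {L : ℝ → ℝ → ℝ → ℝ} {y : ℝ → ℝ}

theorem contDiff_fderiv_uncurry_along (hL : ContDiff ℝ 2 (fun q : ℝ × ℝ × ℝ => L q.1 q.2.1 q.2.2))
    (hy : ContDiff ℝ 2 y) (w : ℝ × ℝ × ℝ) :
    ContDiff ℝ 1
      (fun t => fderiv ℝ (fun q : ℝ × ℝ × ℝ => L q.1 q.2.1 q.2.2) (t, y t, deriv y t) w) :=
  (ContinuousLinearMap.apply ℝ ℝ w).contDiff.comp <| (hL.fderiv_right le_rfl).comp <|
    contDiff_id.prodMk ((hy.of_le one_le_two).prodMk (hy.iterate_deriv' 1 1))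

theorem contDiff_partialU (hL : ContDiff ℝ 2 (fun q : ℝ × ℝ × ℝ => L q.1 q.2.1 q.2.2))
    (hy : ContDiff ℝ 2 y) : ContDiff ℝ 1 (partialU L y) := by
  convert contDiff_fderiv_uncurry_along hL hy (0, 1, 0) using 2 with t
  simp [fderiv_uncurry_apply ((hL.differentiable two_ne_zero) _), partialU]

theorem contDiff_partialV (hL : ContDiff ℝ 2 (fun q : ℝ × ℝ × ℝ => L q.1 q.2.1 q.2.2))
    (hy : ContDiff ℝ 2 y) : ContDiff ℝ 1 (partialV L y) := by
  convert contDiff_fderiv_uncurry_along hL hy (0, 0, 1) using 2 with t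
  simp [fderiv_uncurry_apply ((hL.differentiable two_ne_zero) _), partialV]

theorem integral_partialU_add_partialV_eq_zero {a b : ℝ}
    (hL : ContDiff ℝ 1 (fun q : ℝ × ℝ × ℝ => L q.1 q.2.1 q.2.2)) (hy : ContDiff ℝ 1 y)
    {φ : ℝ → ℝ} (hφ : ContDiff ℝ 1 φ)
    (hconst : ∀ ε : ℝ, ∫ t in a..b, L t (y t + ε * φ t) (deriv y t + ε * deriv φ t) =
      ∫ t in a..b, L t (y t) (deriv y t)) :
    ∫ t in a..b, φ t * partialU L y t + deriv φ t * partialV L y t = 0 := by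
  have hy' := hy.continuous_deriv le_rfl
  have hφ' := hφ.continuous_deriv le_rfl
  have hφc := hφ.continuous
  have hvar := hasDerivAt_integral_comp_add_smul hL (c := fun t => (t, y t, deriv y t))
    (v := fun t => (0, φ t, deriv φ t)) (by fun_prop) (by fun_prop) a b
  simp only [Prod.smul_mk, Prod.mk_add_mk, smul_eq_mul, mul_zero, add_zero, hconst] at hvar
  rw [← hvar.unique (hasDerivAt_const 0 _)]
  refine integral_congr fun t _ => ?_
  simp only [fderiv_uncurry_apply ((hL.differentiable one_ne_zero) _), partialU, partialV]

theorem integral_mul_eulerLagrange {a b : ℝ}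
    (hL : ContDiff ℝ 2 (fun q : ℝ × ℝ × ℝ => L q.1 q.2.1 q.2.2)) (hy : ContDiff ℝ 2 y)
    {φ : ℝ → ℝ} (hφ : ContDiff ℝ 1 φ)
    (hconst : ∀ ε : ℝ, ∫ t in a..b, L t (y t + ε * φ t) (deriv y t + ε * deriv φ t) =
      ∫ t in a..b, L t (y t) (deriv y t)) :
    ∫ t in a..b, φ t * eulerLagrange L y t = φ a * partialV L y a - φ b * partialV L y b := by
  have hU := contDiff_partialU hL hy
  have hV := contDiff_partialV hL hy
  have hparts := integral_deriv_mul_eq_sub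
    (fun t _ => (hφ.differentiable one_ne_zero t).hasDerivAt)
    (fun t _ => (hV.differentiable one_ne_zero t).hasDerivAt)
    ((hφ.continuous_deriv le_rfl).intervalIntegrable a b)
    ((hV.continuous_deriv le_rfl).intervalIntegrable a b)
  have hfirst := integral_partialU_add_partialV_eq_zero (hL.of_le one_le_two) (hy.of_le one_le_two)
    hφ hconst
  have := hU.continuous; have := hV.continuous; have := hV.continuous_deriv le_rfl
  have := hφ.continuous; have := hφ.continuous_deriv le_rfl
  calc ∫ t in a..b, φ t * eulerLagrange L y t
      = (∫ t in a..b, φ t * partialU L y t + deriv φ t * partialV L y t) -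
          ∫ t in a..b, deriv φ t * partialV L y t + φ t * deriv (partialV L y) t := by
        rw [← integral_sub (Continuous.intervalIntegrable (by fun_prop) a b)
          (Continuous.intervalIntegrable (by fun_prop) a b)]
        congr 1; ext t; simp only [eulerLagrange]; ring
    _ = φ a * partialV L y a - φ b * partialV L y b := by rw [hfirst, hparts]; ring

end

theorem classical_second_noether_m1 (a b : ℝ) (hab : a < b)
    (L : ℝ → ℝ → ℝ → ℝ)
    (hL : ContDiff ℝ 2 (fun p : ℝ × ℝ × ℝ => L p.1 p.2.1 p.2.2))
    (g0 g1 : ℝ → ℝ) (hg0 : ContDiff ℝ 2 g0) (hg1 : ContDiff ℝ 2 g1)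
    (hinv : ∀ y p : ℝ → ℝ, ContDiff ℝ 2 y → ContDiff ℝ 2 p →
      ∫ t in a..b, L t (y t + g0 t * p t + g1 t * deriv p t)
          (deriv (fun s => y s + g0 s * p s + g1 s * deriv p s) t) =
        ∫ t in a..b, L t (y t) (deriv y t)) :
    ∀ y : ℝ → ℝ, ContDiff ℝ 3 y → ∀ t ∈ Set.Icc a b,
      g0 t * (deriv (fun u => L t u (deriv y t)) (y t) -
          deriv (fun s => deriv (fun v => L s (y s) v) (deriv y s)) t) -
        deriv (fun s => g1 s * (deriv (fun u => L s u (deriv y s)) (y s) -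
          deriv (fun s' => deriv (fun v => L s' (y s') v) (deriv y s')) s)) t = 0 := by
  intro y hy
  have hy₂ : ContDiff ℝ 2 y := hy.of_le (by norm_num)
  refine noether_dependency (E := eulerLagrange L y) (w := partialV L y) hab hg0.continuous
    (hg1.differentiable two_ne_zero) ((contDiff_partialU hL hy₂).continuous.sub
      ((contDiff_partialV hL hy₂).continuous_deriv le_rfl)) fun p hp => ?_
  set φ := fun s => g0 s * p s + g1 s * deriv p s
  have hφ : ContDiff ℝ 1 φ :=
    ((hg0.of_le one_le_two).mul (hp.of_le one_le_two)).add
      ((hg1.of_le one_le_two).mul (hp.iterate_deriv' 1 1))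
  refine integral_mul_eulerLagrange hL hy₂ hφ fun ε => ?_
  have hpert : ∀ s, y s + g0 s * (ε * p s) + g1 s * deriv (fun s => ε * p s) s = y s + ε * φ s :=
    fun s => by simp only [deriv_const_mul_field', φ]; ring
  have hpert' : ∀ t, deriv (fun s => y s + ε * φ s) t = deriv y t + ε * deriv φ t := fun t =>
    ((hy₂.differentiable two_ne_zero t).hasDerivAt.add
      ((hφ.differentiable one_ne_zero t).hasDerivAt.const_mul ε)).deriv
  simpa only [hpert, hpert'] using hinv y (fun s => ε * p s) hy₂ (contDiff_const.mul hp)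
end

section
/- Fundamental lemma of the double discrete variational calculus: Let a₁ < b₁ − 1, a₂ < b₂ − 1 be integers and M : ℤ × ℤ → ℝ. If ∑_{x=a₁}^{b₁−1} ∑_{y=a₂}^{b₂−1} M(x,y)·η(x+1, y+1) = 0 for every η : ℤ × ℤ → ℝ vanishing on the boundary of the rectangle [a₁,b₁] × [a₂,b₂] (i.e., η(x,y) = 0 whenever x ∈ {a₁,b₁} or y ∈ {a₂,b₂}), then M(x,y) = 0 for all (x,y) with a₁ ≤ x ≤ b₁ − 2 and a₂ ≤ y ≤ b₂ − 2. -/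
section PointMass

variable {R : Type*} [NonAssocSemiring R]

def pointMass (p q : ℤ) : ℤ → ℤ → R := fun u v => if u = p ∧ v = q then 1 else 0

theorem pointMass_eq_zero {p q u v : ℤ} (h : u ≠ p ∨ v ≠ q) : pointMass p q u v = (0 : R) :=
  if_neg (by tauto)

theorem sum_sum_mul_pointMass_add_one {s t : Finset ℤ} {x y : ℤ} (hx : x ∈ s) (hy : y ∈ t)
    (M : ℤ → ℤ → R) :
    ∑ u ∈ s, ∑ v ∈ t, M u v * pointMass (x + 1) (y + 1) (u + 1) (v + 1) = M x y := by
  simp only [pointMass, add_left_inj, mul_ite, mul_one, mul_zero, ite_and]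
  rw [Finset.sum_eq_single_of_mem x hx fun u _ hu => by simp [hu]]
  simp [hy]

end PointMass

theorem double_discrete_fundamental_lemma_general (a1 b1 a2 b2 : ℤ)
    (M : ℤ → ℤ → ℝ)
    (hyp : ∀ η : ℤ → ℤ → ℝ,
      (∀ x y : ℤ, (x = a1 ∨ x = b1 ∨ y = a2 ∨ y = b2) → η x y = 0) →
      ∑ x ∈ Finset.Ico a1 b1, ∑ y ∈ Finset.Ico a2 b2,
        M x y * η (x + 1) (y + 1) = 0) :
    ∀ x y : ℤ, a1 ≤ x → x ≤ b1 - 2 → a2 ≤ y → y ≤ b2 - 2 → M x y = 0 := by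
  intro x y hx1 hx2 hy1 hy2
  have hx : x ∈ Finset.Ico a1 b1 := Finset.mem_Ico.2 ⟨hx1, by omega⟩
  have hy : y ∈ Finset.Ico a2 b2 := Finset.mem_Ico.2 ⟨hy1, by omega⟩
  rw [← sum_sum_mul_pointMass_add_one hx hy M]
  exact hyp _ fun u v hbd => pointMass_eq_zero (by omega)

theorem double_discrete_fundamental_lemma (a1 b1 a2 b2 : ℤ)
    (h1 : a1 < b1 - 1) (h2 : a2 < b2 - 1) (M : ℤ → ℤ → ℝ)
    (hyp : ∀ η : ℤ → ℤ → ℝ,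
      (∀ x y : ℤ, (x = a1 ∨ x = b1 ∨ y = a2 ∨ y = b2) → η x y = 0) →
      ∑ x ∈ Finset.Ico a1 b1, ∑ y ∈ Finset.Ico a2 b2,
        M x y * η (x + 1) (y + 1) = 0) :
    ∀ x y : ℤ, a1 ≤ x → x ≤ b1 - 2 → a2 ≤ y → y ≤ b2 - 2 → M x y = 0 :=
  double_discrete_fundamental_lemma_general a1 b1 a2 b2 M hyp
end

section
/- Second Noether theorem for the q-calculus (n = 1, r = 1, m = 0): Let q > 1, a = q^k, b = q^K with K ≥ k + 2, L : ℝ × ℝ × ℝ → ℝ with L(t,·,·) C¹, and g : q^{ℕ₀} → ℝ. Suppose that for all y, p : q^{ℕ₀} → ℝ, ∑_{i=k}^{K-1} L(q^i, y(q^{i+1}) + g(q^{i+1})p(q^{i+1}), D_q(y + g·p)(q^i))·(q−1)q^i = ∑_{i=k}^{K-1} L(q^i, y(q^{i+1}), D_q y(q^i))·(q−1)q^i. Then for every y, g(qt)·( ∂L/∂u(t, y(qt), D_q y(t)) − D_q[ s ↦ ∂L/∂v(s, y(qs), D_q y(s)) ](t) ) = 0 for all t = q^i with k ≤ i ≤ K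 − 2. -/
/-- q-derivative D_q f(t) = (f(qt) - f(t)) / ((q-1) t). -/
noncomputable def qderiv (q : ℝ) (f : ℝ → ℝ) (t : ℝ) : ℝ := (f (q * t) - f t) / ((q - 1) * t)

/-!
Perturb `y` at the single point `σ(q^i) = q^(i+1)` of the grid, by `ε` (possible through `g`
as soon as `g (q^(i+1)) ≠ 0`). Only the two summands of the action over `[q^i, q^(i+1)]` and
`[q^(i+1), q^(i+2)]` see the perturbation, so by invariance their sum is constant in `ε`; its
derivative at `ε = 0` is `μ(q^i) · E(L)(q^i)`, which therefore vanishes.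
-/

open Finset Function

theorem DifferentiableAt.hasDerivAt_comp₂ {f : ℝ → ℝ → ℝ} {u v : ℝ → ℝ} {u' v' x : ℝ}
    (hf : DifferentiableAt ℝ (fun p : ℝ × ℝ => f p.1 p.2) (u x, v x))
    (hu : HasDerivAt u u' x) (hv : HasDerivAt v v' x) :
    HasDerivAt (fun s => f (u s) (v s))
      (u' * deriv (fun w => f w (v x)) (u x) + v' * deriv (fun w => f (u x) w) (v x)) x := by
  set D := fderiv ℝ (fun p : ℝ × ℝ => f p.1 p.2) (u x, v x)
  have hF : HasFDerivAt (fun p : ℝ × ℝ => f p.1 p.2) D (u x, v x) := hf.hasFDerivAt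
  have h₁ : HasDerivAt (fun w => f w (v x)) (D (1, 0)) (u x) :=
    HasFDerivAt.comp_hasDerivAt (f := fun w => (w, v x)) (u x) hF
      ((hasDerivAt_id' (u x)).prodMk (hasDerivAt_const (u x) (v x)))
  have h₂ : HasDerivAt (fun w => f (u x) w) (D (0, 1)) (v x) :=
    HasFDerivAt.comp_hasDerivAt (f := fun w => (u x, w)) (v x) hF
      ((hasDerivAt_const (v x) (u x)).prodMk (hasDerivAt_id' (v x)))
  have hsplit : ((u', v') : ℝ × ℝ) = u' • (1, 0) + v' • (0, 1) := by simp
  rw [h₁.deriv, h₂.deriv, ← smul_eq_mul, ← smul_eq_mul, ← map_smul, ← map_smul, ← map_add,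
    ← hsplit]
  exact hF.comp_hasDerivAt x (hu.prodMk hv)

theorem sum_Ico_chain_sub_of_forall_ne {M : Type*} [AddCommGroup M] {α : Type*}
    (Φ : ℕ → α → α → M) {x x' : ℕ → α} {k n K : ℕ} (hk : k ≤ n) (hK : n + 2 ≤ K)
    (h : ∀ j, j ≠ n + 1 → x' j = x j) :
    ∑ j ∈ Ico k K, Φ j (x' j) (x' (j + 1)) - ∑ j ∈ Ico k K, Φ j (x j) (x (j + 1)) =
      Φ n (x n) (x' (n + 1)) + Φ (n + 1) (x' (n + 1)) (x (n + 1 + 1)) -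
        (Φ n (x n) (x (n + 1)) + Φ (n + 1) (x (n + 1)) (x (n + 1 + 1))) := by
  have hpair : {n, n + 1} ⊆ Ico k K := by
    intro j hj
    simp only [mem_insert, mem_singleton] at hj
    rw [mem_Ico]
    omega
  rw [← sum_sub_distrib, ← sum_subset hpair, sum_pair (by omega), h n (by omega),
    h (n + 1 + 1) (by omega)]
  · abel
  · intro j _ hj
    simp only [mem_insert, mem_singleton, not_or] at hj
    rw [h j hj.2, h (j + 1) (by omega), sub_self]

noncomputable def qEulerLagrange (q : ℝ) (L : ℝ → ℝ → ℝ → ℝ) (y : ℝ → ℝ) (t : ℝ) : ℝ :=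
  deriv (fun u => L t u (qderiv q y t)) (y (q * t)) -
    qderiv q (fun s => deriv (fun v => L s (y (q * s)) v) (qderiv q y s)) t

/-- The summand of the delta integral over `[t, q t]`, for a path with `y t = a`, `y (q t) = b`. -/
noncomputable def qStep (q : ℝ) (L : ℝ → ℝ → ℝ → ℝ) (t a b : ℝ) : ℝ :=
  L t b ((b - a) / ((q - 1) * t)) * ((q - 1) * t)

theorem sum_Ico_qAction_eq_sum_qStep (q : ℝ) (L : ℝ → ℝ → ℝ → ℝ) (z : ℝ → ℝ) (k K : ℕ) :
    ∑ j ∈ Ico k K, L (q ^ j) (z (q ^ (j + 1))) (qderiv q z (q ^ j)) * ((q - 1) * q ^ j) =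
      ∑ j ∈ Ico k K, qStep q L (q ^ j) (z (q ^ j)) (z (q ^ (j + 1))) := by
  simp only [qStep, qderiv, pow_succ']

theorem hasDerivAt_qStep_add_qStep {q t : ℝ} (hq : q ≠ 1) (hq₀ : q ≠ 0) (ht : t ≠ 0)
    {L : ℝ → ℝ → ℝ → ℝ} {y : ℝ → ℝ}
    (hL₀ : DifferentiableAt ℝ (fun p : ℝ × ℝ => L t p.1 p.2) (y (q * t), qderiv q y t))
    (hL₁ : DifferentiableAt ℝ (fun p : ℝ × ℝ => L (q * t) p.1 p.2)
      (y (q * (q * t)), qderiv q y (q * t))) :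
    HasDerivAt (fun ε => qStep q L t (y t) (y (q * t) + ε) +
        qStep q L (q * t) (y (q * t) + ε) (y (q * (q * t))))
      ((q - 1) * t * qEulerLagrange q L y t) 0 := by
  have hd : (q - 1) * t ≠ 0 := mul_ne_zero (sub_ne_zero.mpr hq) ht
  have hd' : (q - 1) * (q * t) ≠ 0 := mul_ne_zero (sub_ne_zero.mpr hq) (mul_ne_zero hq₀ ht)
  have hu : HasDerivAt (fun ε : ℝ => y (q * t) + ε) 1 0 := (hasDerivAt_id' 0).const_add _
  have h₀ := DifferentiableAt.hasDerivAt_comp₂ (f := L t) (by simpa [qderiv] using hL₀) hu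
    ((hu.sub_const (y t)).div_const ((q - 1) * t))
  have h₁ := DifferentiableAt.hasDerivAt_comp₂ (f := L (q * t)) (by simpa [qderiv] using hL₁)
    (hasDerivAt_const 0 (y (q * (q * t))))
    (((hu.const_sub (y (q * (q * t)))).div_const ((q - 1) * (q * t))))
  simp only [add_zero] at h₀ h₁
  refine ((h₀.mul_const ((q - 1) * t)).add (h₁.mul_const ((q - 1) * (q * t)))).congr_deriv ?_
  simp only [qEulerLagrange, qderiv]
  field_simp
  ring

theorem qEulerLagrange_eq_zero_of_forall_eq {q t : ℝ} (hq : q ≠ 1) (hq₀ : q ≠ 0) (ht : t ≠ 0)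
    {L : ℝ → ℝ → ℝ → ℝ} {y : ℝ → ℝ}
    (hL₀ : DifferentiableAt ℝ (fun p : ℝ × ℝ => L t p.1 p.2) (y (q * t), qderiv q y t))
    (hL₁ : DifferentiableAt ℝ (fun p : ℝ × ℝ => L (q * t) p.1 p.2)
      (y (q * (q * t)), qderiv q y (q * t)))
    (h : ∀ ε, qStep q L t (y t) (y (q * t) + ε) +
        qStep q L (q * t) (y (q * t) + ε) (y (q * (q * t))) =
      qStep q L t (y t) (y (q * t)) + qStep q L (q * t) (y (q * t)) (y (q * (q * t)))) :
    qEulerLagrange q L y t = 0 := by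
  have hD := hasDerivAt_qStep_add_qStep hq hq₀ ht hL₀ hL₁
  rw [funext h] at hD
  have hzero := hD.unique (hasDerivAt_const 0 _)
  exact (mul_eq_zero.mp hzero).resolve_left (mul_ne_zero (sub_ne_zero.mpr hq) ht)

theorem q_second_noether_m0 (q : ℝ) (hq : 1 < q) (k K : ℕ) (hkK : k + 2 ≤ K)
    (L : ℝ → ℝ → ℝ → ℝ)
    (hL : ∀ t : ℝ, ContDiff ℝ 1 (fun p : ℝ × ℝ => L t p.1 p.2))
    (g : ℝ → ℝ)
    (hinv : ∀ y p : ℝ → ℝ,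
      ∑ i ∈ Finset.Ico k K,
          L (q ^ i) (y (q ^ (i + 1)) + g (q ^ (i + 1)) * p (q ^ (i + 1)))
            (qderiv q (fun s => y s + g s * p s) (q ^ i)) * ((q - 1) * q ^ i) =
        ∑ i ∈ Finset.Ico k K,
          L (q ^ i) (y (q ^ (i + 1))) (qderiv q y (q ^ i)) * ((q - 1) * q ^ i)) :
    ∀ y : ℝ → ℝ, ∀ i : ℕ, k ≤ i → i ≤ K - 2 →
      g (q * q ^ i) *
        (deriv (fun u => L (q ^ i) u (qderiv q y (q ^ i))) (y (q * q ^ i)) -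
          qderiv q
            (fun s => deriv (fun v => L s (y (q * s)) v) (qderiv q y s)) (q ^ i)) = 0 := by
  intro y i hki hiK
  have hq₀ : 0 < q := zero_lt_one.trans hq
  have hdiff (t : ℝ) : Differentiable ℝ (fun p : ℝ × ℝ => L t p.1 p.2) :=
    (hL t).differentiable one_ne_zero
  show g (q * q ^ i) * qEulerLagrange q L y (q ^ i) = 0
  refine mul_eq_zero.mpr (or_iff_not_imp_left.mpr fun hg => ?_)
  refine qEulerLagrange_eq_zero_of_forall_eq hq.ne' hq₀.ne' (pow_ne_zero i hq₀.ne')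
    (hdiff _ _) (hdiff _ _) fun ε => ?_
  set p : ℝ → ℝ := fun s => if s = q * q ^ i then ε / g (q * q ^ i) else 0
  have hp (j : ℕ) (hj : j ≠ i + 1) : y (q ^ j) + g (q ^ j) * p (q ^ j) = y (q ^ j) := by
    have : q ^ j ≠ q * q ^ i := by
      rw [← pow_succ']; exact (pow_right_injective₀ hq₀ hq.ne').ne hj
    simp [p, this]
  have hsum : ∑ j ∈ Ico k K, qStep q L (q ^ j) (y (q ^ j) + g (q ^ j) * p (q ^ j))
        (y (q ^ (j + 1)) + g (q ^ (j + 1)) * p (q ^ (j + 1))) =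
      ∑ j ∈ Ico k K, qStep q L (q ^ j) (y (q ^ j)) (y (q ^ (j + 1))) :=
    (sum_Ico_qAction_eq_sum_qStep q L (fun s => y s + g s * p s) k K).symm.trans
      ((hinv y p).trans (sum_Ico_qAction_eq_sum_qStep q L y k K))
  have hchain := sum_Ico_chain_sub_of_forall_ne (fun j => qStep q L (q ^ j))
    (x := fun j => y (q ^ j)) hki (K := K) (by omega) hp
  beta_reduce at hchain
  rw [hsum, sub_self] at hchain
  simp only [pow_succ', p, if_pos, mul_div_cancel₀ _ hg] at hchain
  linarith
end
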